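/- Let $(a_1,b_1),\ldots,(a_m,b_m)$ be points in $\mathbb{R}^2$ and $c_1,\ldots,c_m \in (0,1]$ with $\sum_{i=1}^m c_i = 1$. Then there exist indices $k,\ell$ and $p \in [0,1]$ such that $\sum_{i=1}^m c_i (a_i,b_i) \geq p(a_k,b_k) + (1-p)(a_\ell,b_\ell)$, where $\geq$ is the componentwise order on $\mathbb{R}^2$. -/

import Mathlib

/-!
Translate so that the weighted mean is the origin; we need a segment between two of the points
meeting the closed negative quadrant `Q`. If no point lies in `Q`, take, among the points with
`x ≤ 0` (all of which have `y > 0`), the point `k` of smallest slope `x / y`. The cross product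
`f i = y k * x i - x k * y i` is then nonnegative at every point with `y > 0`, while its weighted
mean is `≤ 0`; as some point has `y ≤ 0`, one such point `l` has `f l ≤ 0`, i.e. lies weakly to the
right of the line through `0` and `k`, and the segment from `k` to `l` crosses the negative
`y`-axis.
-/

open Finset

lemma exists_nonpos_of_weighted_sum_nonpos {ι : Type*} [Fintype ι] [Nonempty ι] {c x : ι → ℝ}
    (hc : ∀ i, 0 < c i) (h : ∑ i, c i * x i ≤ 0) : ∃ i, x i ≤ 0 := by
  obtain ⟨i, -, hi⟩ := exists_le_of_sum_le univ_nonempty (h.trans_eq (sum_const_zero (s := univ)).symm)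
  exact ⟨i, nonpos_of_mul_nonpos_right hi (hc i)⟩

lemma exists_segment_nonpos_of_cross_nonpos {xk yk xl yl : ℝ} (hxk : xk ≤ 0) (hxl : 0 < xl)
    (hcross : yk * xl - xk * yl ≤ 0) :
    ∃ p : ℝ, 0 ≤ p ∧ p ≤ 1 ∧ p * xk + (1 - p) * xl ≤ 0 ∧ p * yk + (1 - p) * yl ≤ 0 := by
  have hden : 0 < xl - xk := by linarith
  refine ⟨xl / (xl - xk), by positivity, (div_le_one hden).2 (by linarith), ?_, ?_⟩
  · have : xl / (xl - xk) * xk + (1 - xl / (xl - xk)) * xl = 0 := by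
      field_simp
      ring
    exact this.le
  · have : xl / (xl - xk) * yk + (1 - xl / (xl - xk)) * yl = (yk * xl - xk * yl) / (xl - xk) := by
      field_simp
      ring
    exact this ▸ div_nonpos_of_nonpos_of_nonneg hcross hden.le

theorem exists_segment_nonpos_of_weighted_sum_nonpos {ι : Type*} [Fintype ι] [Nonempty ι]
    {c x y : ι → ℝ} (hc : ∀ i, 0 < c i) (hx : ∑ i, c i * x i ≤ 0) (hy : ∑ i, c i * y i ≤ 0) :
    ∃ (k l : ι) (p : ℝ), 0 ≤ p ∧ p ≤ 1 ∧
      p * x k + (1 - p) * x l ≤ 0 ∧ p * y k + (1 - p) * y l ≤ 0 := by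
  by_cases hQ : ∃ i, x i ≤ 0 ∧ y i ≤ 0
  · obtain ⟨i, hxi, hyi⟩ := hQ
    exact ⟨i, i, 1, zero_le_one, le_rfl, by simpa using hxi, by simpa using hyi⟩
  push Not at hQ
  obtain ⟨k, hxk, hkmin⟩ : ∃ k, x k ≤ 0 ∧ ∀ i, x i ≤ 0 → x k / y k ≤ x i / y i := by
    obtain ⟨i, hi⟩ := exists_nonpos_of_weighted_sum_nonpos hc hx
    obtain ⟨k, hk, hmin⟩ := exists_min_image {i | x i ≤ 0} (fun i ↦ x i / y i) ⟨i, by simpa⟩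
    exact ⟨k, by simpa using hk, fun i hi ↦ hmin i (by simpa using hi)⟩
  have hyk : 0 < y k := hQ k hxk
  set f : ι → ℝ := fun i ↦ y k * x i - x k * y i
  have hf_nonneg : ∀ i, 0 < y i → 0 ≤ f i := by
    intro i hyi
    by_cases hxi : x i ≤ 0
    · have := hkmin i hxi
      rw [div_le_div_iff₀ hyk hyi] at this
      simp only [f]
      linarith
    · nlinarith [mul_pos hyk (not_le.1 hxi), mul_nonneg (neg_nonneg.2 hxk) hyi.le]
  obtain ⟨l, hyl, hfl⟩ : ∃ l, y l ≤ 0 ∧ f l ≤ 0 := by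
    by_contra! h
    obtain ⟨j, hyj⟩ := exists_nonpos_of_weighted_sum_nonpos hc hy
    have hpos : 0 < ∑ i, c i * f i := by
      refine sum_pos' (fun i _ ↦ mul_nonneg (hc i).le ?_) ⟨j, mem_univ j, mul_pos (hc j) (h j hyj)⟩
      rcases le_or_gt (y i) 0 with hyi | hyi
      exacts [(h i hyi).le, hf_nonneg i hyi]
    have hsum : ∑ i, c i * f i = y k * ∑ i, c i * x i - x k * ∑ i, c i * y i := by
      simp only [f, mul_sum, ← sum_sub_distrib]
      exact sum_congr rfl fun i _ ↦ by ring
    nlinarith [mul_nonpos_of_nonneg_of_nonpos hyk.le hx, mul_nonneg_of_nonpos_of_nonpos hxk hy]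
  have hxl : 0 < x l := not_le.1 fun hxl ↦ (hQ l hxl).not_ge hyl
  obtain ⟨p, hp⟩ := exists_segment_nonpos_of_cross_nonpos hxk hxl hfl
  exact ⟨k, l, p, hp⟩

lemma sum_mul_sub_weighted_sum {ι : Type*} [Fintype ι] {c x : ι → ℝ} (hc : ∑ i, c i = 1) :
    ∑ i, c i * (x i - ∑ j, c j * x j) = 0 := by
  simp only [mul_sub, sum_sub_distrib, ← sum_mul, hc, one_mul, sub_self]

theorem stmt0 (m : ℕ) (a b c : Fin m → ℝ)
    (hc : ∀ i, 0 < c i ∧ c i ≤ 1) (hsum : ∑ i, c i = 1) :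
    ∃ (k l : Fin m) (p : ℝ), 0 ≤ p ∧ p ≤ 1 ∧
      p * a k + (1 - p) * a l ≤ ∑ i, c i * a i ∧
      p * b k + (1 - p) * b l ≤ ∑ i, c i * b i := by
  have : Nonempty (Fin m) :=
    univ_nonempty_iff.1 (nonempty_of_sum_ne_zero (hsum.trans_ne one_ne_zero))
  obtain ⟨k, l, p, hp0, hp1, ha, hb⟩ := exists_segment_nonpos_of_weighted_sum_nonpos
    (fun i ↦ (hc i).1) (sum_mul_sub_weighted_sum (x := a) hsum).le
    (sum_mul_sub_weighted_sum (x := b) hsum).le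
  exact ⟨k, l, p, hp0, hp1, by linear_combination ha, by linear_combination hb⟩
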